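/- For every graph G without isolated vertices: |V(G)| ≥ |corona(G)| ≥ α(G) ≥ |core(G)| ≥ |ker(G)|, where corona(G) is the union of all maximum independent sets, core(G) their intersection, and ker(G) the intersection of all critical independent sets. -/
import Mathlib


open Finset

open scoped Classical

variable {V : Type*}

/-- The neighborhood `N(X)` of a set of vertices `X`. -/
noncomputable def nbhd [Fintype V] (G : SimpleGraph V) (X : Finset V) : Finset V :=
  Finset.univ.filter (fun v => ∃ x ∈ X, G.Adj v x)

/-- The difference `d(X) = |X| - |N(X)|`. -/
noncomputable def diffd [Fintype V] (G : SimpleGraph V) (X : Finset V) : ℤ :=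
  (X.card : ℤ) - ((nbhd G X).card : ℤ)

/-- The critical difference `d_c(G) = max{d(X) : X ⊆ V}`. -/
noncomputable def critDiff [Fintype V] (G : SimpleGraph V) : ℤ :=
  Finset.univ.powerset.sup' ⟨∅, Finset.empty_mem_powerset _⟩ (diffd G)

/-- A set of vertices is independent if no two of its vertices are adjacent. -/
def IsIndep [Fintype V] (G : SimpleGraph V) (A : Finset V) : Prop :=
  ∀ a ∈ A, ∀ b ∈ A, ¬ G.Adj a b

/-- A critical independent set: independent with `d(A) = d_c(G)`. -/
def IsCritIndep [Fintype V] (G : SimpleGraph V) (A : Finset V) : Prop :=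
  IsIndep G A ∧ diffd G A = critDiff G

/-- The independence number `α(G)`. -/
noncomputable def indepNum [Fintype V] (G : SimpleGraph V) : ℕ :=
  (Finset.univ.powerset.filter (fun A => IsIndep G A)).sup Finset.card

/-- The independence number of the induced subgraph `G[X]`,
realized as the largest independent set contained in `X`. -/
noncomputable def indepNumOn [Fintype V] (G : SimpleGraph V) (X : Finset V) : ℕ :=
  (X.powerset.filter (fun A => IsIndep G A)).sup Finset.card

/-- A matching: a set of edges of `G`, pairwise vertex-disjoint. -/
def IsMatchingSet [Fintype V] (G : SimpleGraph V) (M : Finset (Sym2 V)) : Prop :=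
  (∀ e ∈ M, e ∈ G.edgeSet) ∧
  (∀ e ∈ M, ∀ f ∈ M, e ≠ f → ∀ v : V, v ∈ e → v ∉ f)

/-- The matching number `μ(G)`. -/
noncomputable def matchNum [Fintype V] (G : SimpleGraph V) : ℕ :=
  ((Finset.univ : Finset (Sym2 V)).powerset.filter (fun M => IsMatchingSet G M)).sup Finset.card

/-- The matching number of the induced subgraph `G[X]`, realized as the
largest matching of `G` all of whose edges have both endpoints in `X`. -/
noncomputable def matchNumOn [Fintype V] (G : SimpleGraph V) (X : Finset V) : ℕ :=
  ((Finset.univ : Finset (Sym2 V)).powerset.filter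
    (fun M => IsMatchingSet G M ∧ ∀ e ∈ M, ∀ v ∈ e, v ∈ X)).sup Finset.card

/-- `ker(G)`: the intersection of all critical independent sets. -/
noncomputable def kerG [Fintype V] (G : SimpleGraph V) : Finset V :=
  Finset.univ.filter (fun v => ∀ A : Finset V, IsCritIndep G A → v ∈ A)

/-- A maximum independent set, i.e. a member of `Ω(G)`. -/
def IsMaxIndep [Fintype V] (G : SimpleGraph V) (S : Finset V) : Prop :=
  IsIndep G S ∧ S.card = indepNum G

/-- `core(G)`: the intersection of all maximum independent sets. -/
noncomputable def coreG [Fintype V] (G : SimpleGraph V) : Finset V :=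
  Finset.univ.filter (fun v => ∀ S : Finset V, IsMaxIndep G S → v ∈ S)

/-- `corona(G)`: the union of all maximum independent sets. -/
noncomputable def coronaG [Fintype V] (G : SimpleGraph V) : Finset V :=
  Finset.univ.filter (fun v => ∃ S : Finset V, IsMaxIndep G S ∧ v ∈ S)

/-- `G` has no isolated vertices. -/
def NoIsolated (G : SimpleGraph V) : Prop := ∀ v : V, ∃ w, G.Adj v w

section Aux

variable [Fintype V] {G : SimpleGraph V}

lemma mem_nbhd {X : Finset V} {v : V} : v ∈ nbhd G X ↔ ∃ x ∈ X, G.Adj v x := by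
  simp [nbhd]

lemma nbhd_mono {X Y : Finset V} (h : X ⊆ Y) : nbhd G X ⊆ nbhd G Y := by
  intro v hv
  rcases mem_nbhd.1 hv with ⟨x, hx, ha⟩
  exact mem_nbhd.2 ⟨x, h hx, ha⟩

lemma nbhd_union (X Y : Finset V) : nbhd G (X ∪ Y) = nbhd G X ∪ nbhd G Y := by
  ext v
  simp only [mem_nbhd, Finset.mem_union]
  constructor
  · rintro ⟨x, hx | hx, ha⟩
    · exact Or.inl ⟨x, hx, ha⟩
    · exact Or.inr ⟨x, hx, ha⟩
  · rintro (⟨x, hx, ha⟩ | ⟨x, hx, ha⟩)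
    · exact ⟨x, Or.inl hx, ha⟩
    · exact ⟨x, Or.inr hx, ha⟩

lemma diffd_le_critDiff (X : Finset V) : diffd G X ≤ critDiff G :=
  Finset.le_sup' _ (Finset.mem_powerset.2 (Finset.subset_univ X))

lemma card_le_indepNum {A : Finset V} (h : IsIndep G A) : A.card ≤ indepNum G :=
  Finset.le_sup (by
    simp only [Finset.mem_filter, Finset.mem_powerset]
    exact ⟨Finset.subset_univ A, h⟩)

lemma exists_maxIndep : ∃ S : Finset V, IsMaxIndep G S := by
  have hne : (Finset.univ.powerset.filter (fun A => IsIndep G A)).Nonempty := by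
    refine ⟨∅, ?_⟩
    simp [IsIndep]
  obtain ⟨S, hS, hcard⟩ := Finset.exists_mem_eq_sup _ hne Finset.card
  simp only [Finset.mem_filter, Finset.mem_powerset] at hS
  exact ⟨S, hS.2, hcard.symm⟩

lemma exists_critIndep : ∃ A : Finset V, IsCritIndep G A := by
  obtain ⟨X, hX, hXc⟩ := Finset.exists_mem_eq_sup' (⟨∅, Finset.empty_mem_powerset _⟩ :
    (Finset.univ.powerset (α := V)).Nonempty) (diffd G)
  set I : Finset V := X \ nbhd G X with hI
  have hindep : IsIndep G I := by
    intro a ha b hb hab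
    rcases Finset.mem_sdiff.1 ha with ⟨haX, haN⟩
    rcases Finset.mem_sdiff.1 hb with ⟨hbX, _⟩
    exact haN (mem_nbhd.2 ⟨b, hbX, hab⟩)
  have hNI : nbhd G I ⊆ nbhd G X \ X := by
    intro w hw
    rcases mem_nbhd.1 hw with ⟨i, hiI, hadj⟩
    rcases Finset.mem_sdiff.1 hiI with ⟨hiX, hiN⟩
    refine Finset.mem_sdiff.2 ⟨mem_nbhd.2 ⟨i, hiX, hadj⟩, fun hwX => ?_⟩
    exact hiN (mem_nbhd.2 ⟨w, hwX, hadj.symm⟩)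
  refine ⟨I, hindep, le_antisymm (diffd_le_critDiff I) ?_⟩
  have h1 : (X ∩ nbhd G X).card + I.card = X.card := Finset.card_inter_add_card_sdiff X (nbhd G X)
  have h2 : (nbhd G I).card ≤ (nbhd G X \ X).card := Finset.card_le_card hNI
  have h3 : (nbhd G X \ X).card + (nbhd G X ∩ X).card = (nbhd G X).card := by
    rw [add_comm]
    exact Finset.card_inter_add_card_sdiff _ _
  have h4 : (X ∩ nbhd G X).card = (nbhd G X ∩ X).card := by rw [Finset.inter_comm]
  have hdc : critDiff G = (X.card : ℤ) - ((nbhd G X).card : ℤ) := hXc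
  rw [hdc]
  unfold diffd
  omega

lemma critIndep_inter {A B : Finset V} (hA : IsCritIndep G A) (hB : IsCritIndep G B) :
    IsCritIndep G (A ∩ B) := by
  obtain ⟨hAi, hAd⟩ := hA
  obtain ⟨hBi, hBd⟩ := hB
  refine ⟨fun a ha b hb => hAi a (Finset.mem_inter.1 ha).1 b (Finset.mem_inter.1 hb).1, ?_⟩
  refine le_antisymm (diffd_le_critDiff _) ?_
  have hNu : nbhd G (A ∪ B) = nbhd G A ∪ nbhd G B := nbhd_union A B
  have hNi : nbhd G (A ∩ B) ⊆ nbhd G A ∩ nbhd G B :=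
    Finset.subset_inter (nbhd_mono Finset.inter_subset_left)
      (nbhd_mono Finset.inter_subset_right)
  have h1 : (A ∩ B).card + (A ∪ B).card = A.card + B.card :=
    Finset.card_inter_add_card_union A B
  have h2 : (nbhd G (A ∩ B)).card ≤ (nbhd G A ∩ nbhd G B).card := Finset.card_le_card hNi
  have h3 : (nbhd G A ∩ nbhd G B).card + (nbhd G A ∪ nbhd G B).card
      = (nbhd G A).card + (nbhd G B).card := Finset.card_inter_add_card_union _ _
  have h4 : diffd G (A ∪ B) ≤ critDiff G := diffd_le_critDiff _
  have h5 : (nbhd G (A ∪ B)).card = (nbhd G A ∪ nbhd G B).card := by rw [hNu]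
  unfold diffd at *
  omega

lemma kerG_min : IsCritIndep G (kerG G) ∧ ∀ A : Finset V, IsCritIndep G A → kerG G ⊆ A := by
  have hne : (Finset.univ.powerset.filter (fun A => IsCritIndep G A)).Nonempty := by
    obtain ⟨A, hA⟩ := exists_critIndep (G := G)
    refine ⟨A, ?_⟩
    simp only [Finset.mem_filter, Finset.mem_powerset]
    exact ⟨Finset.subset_univ A, hA⟩
  obtain ⟨A₀, hA₀mem, hmin⟩ := Finset.exists_min_image _ Finset.card hne
  simp only [Finset.mem_filter, Finset.mem_powerset] at hA₀mem
  have hA₀ : IsCritIndep G A₀ := hA₀mem.2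
  have hsub : ∀ A : Finset V, IsCritIndep G A → A₀ ⊆ A := by
    intro A hA
    have hc : IsCritIndep G (A₀ ∩ A) := critIndep_inter hA₀ hA
    have h1 : A₀.card ≤ (A₀ ∩ A).card := hmin _ (by
      simp only [Finset.mem_filter, Finset.mem_powerset]
      exact ⟨Finset.subset_univ _, hc⟩)
    have h2 : A₀ ∩ A = A₀ :=
      Finset.eq_of_subset_of_card_le (Finset.inter_subset_left) h1
    exact h2 ▸ Finset.inter_subset_right
  have hker : kerG G = A₀ := by
    apply Finset.Subset.antisymm
    · intro v hv
      have := (Finset.mem_filter.1 hv).2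
      exact this A₀ hA₀
    · intro v hv
      refine Finset.mem_filter.2 ⟨Finset.mem_univ v, fun A hA => hsub A hA hv⟩
  rw [hker]
  exact ⟨hA₀, hsub⟩

lemma kerG_subset_maxIndep {S : Finset V} (hS : IsMaxIndep G S) : kerG G ⊆ S := by
  obtain ⟨hker, hmin⟩ := kerG_min (G := G)
  set A₀ := kerG G with hA₀def
  by_contra hns
  have hB : (A₀ \ S).Nonempty := by
    rw [Finset.sdiff_nonempty]
    exact hns
  set W := A₀ ∩ S with hW
  set B := A₀ \ S with hBdef
  -- W is independent
  have hWindep : IsIndep G W := fun a ha b hb =>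
    hker.1 a (Finset.mem_inter.1 ha).1 b (Finset.mem_inter.1 hb).1
  -- d(W) < d_c, else A₀ ⊆ W ⊆ S
  have hWd : diffd G W ≤ critDiff G - 1 := by
    rcases lt_or_eq_of_le (diffd_le_critDiff (G := G) W) with h | h
    · omega
    · exfalso
      have : A₀ ⊆ W := hmin W ⟨hWindep, h⟩
      exact hns (this.trans Finset.inter_subset_right)
  have hNA : nbhd G A₀ = nbhd G W ∪ nbhd G B := by
    rw [← nbhd_union]
    congr 1
    rw [Finset.union_comm]
    exact (Finset.sdiff_union_inter A₀ S).symm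
  -- |N(B) \ N(W)| ≤ |B| - 1
  have hcardN : (nbhd G B \ nbhd G W).card + (nbhd G W).card
      = (nbhd G A₀).card := by
    rw [Finset.card_sdiff_add_card, hNA, Finset.union_comm]
  have hWB : W.card + B.card = A₀.card := Finset.card_inter_add_card_sdiff A₀ S
  have hA₀d : diffd G A₀ = critDiff G := hker.2
  -- S ∩ N(B) ⊆ N(B) \ N(W)
  have hSNB : S ∩ nbhd G B ⊆ nbhd G B \ nbhd G W := by
    intro s hs
    rcases Finset.mem_inter.1 hs with ⟨hsS, hsNB⟩
    refine Finset.mem_sdiff.2 ⟨hsNB, fun hsNW => ?_⟩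
    rcases mem_nbhd.1 hsNW with ⟨w, hwW, hadj⟩
    exact hS.1 s hsS w (Finset.mem_inter.1 hwW).2 hadj
  -- the enlarged independent set T
  set T := (S \ nbhd G B) ∪ B with hT
  have hTindep : IsIndep G T := by
    intro a ha b hb hab
    rcases Finset.mem_union.1 ha with ha' | ha' <;>
      rcases Finset.mem_union.1 hb with hb' | hb'
    · exact hS.1 a (Finset.mem_sdiff.1 ha').1 b (Finset.mem_sdiff.1 hb').1 hab
    · exact (Finset.mem_sdiff.1 ha').2 (mem_nbhd.2 ⟨b, hb', hab⟩)
    · exact (Finset.mem_sdiff.1 hb').2 (mem_nbhd.2 ⟨a, ha', hab.symm⟩)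
    · exact hker.1 a (Finset.mem_sdiff.1 ha').1 b (Finset.mem_sdiff.1 hb').1 hab
  have hTcard : T.card = (S \ nbhd G B).card + B.card := by
    rw [hT]
    apply Finset.card_union_of_disjoint
    rw [Finset.disjoint_left]
    intro a ha hab
    exact (Finset.mem_sdiff.1 hab).2 (Finset.mem_sdiff.1 ha).1
  have hScard : (S ∩ nbhd G B).card + (S \ nbhd G B).card = S.card :=
    Finset.card_inter_add_card_sdiff S (nbhd G B)
  have hTle : T.card ≤ indepNum G := card_le_indepNum hTindep
  have hSeq : S.card = indepNum G := hS.2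
  have hSNBle : (S ∩ nbhd G B).card ≤ (nbhd G B \ nbhd G W).card :=
    Finset.card_le_card hSNB
  have hBpos : 1 ≤ B.card := Finset.card_pos.2 hB
  unfold diffd at hWd hA₀d
  omega

end Aux

/-- `|V| ≥ |corona(G)| ≥ α(G) ≥ |core(G)| ≥ |ker(G)|`. -/
theorem stmt_9 {V : Type*} [Fintype V] (G : SimpleGraph V) (hiso : NoIsolated G) :
    (coronaG G).card ≤ Fintype.card V ∧
    indepNum G ≤ (coronaG G).card ∧
    (coreG G).card ≤ indepNum G ∧
    (kerG G).card ≤ (coreG G).card := by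
  refine ⟨?_, ?_, ?_, ?_⟩
  · exact (Finset.card_filter_le _ _).trans_eq (Finset.card_univ)
  · obtain ⟨S, hS⟩ := exists_maxIndep (G := G)
    have hsub : S ⊆ coronaG G := fun v hv =>
      Finset.mem_filter.2 ⟨Finset.mem_univ v, S, hS, hv⟩
    calc indepNum G = S.card := hS.2.symm
      _ ≤ (coronaG G).card := Finset.card_le_card hsub
  · obtain ⟨S, hS⟩ := exists_maxIndep (G := G)
    have hsub : coreG G ⊆ S := fun v hv => (Finset.mem_filter.1 hv).2 S hS
    calc (coreG G).card ≤ S.card := Finset.card_le_card hsub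
      _ = indepNum G := hS.2
  · apply Finset.card_le_card
    intro v hv
    refine Finset.mem_filter.2 ⟨Finset.mem_univ v, fun S hS => kerG_subset_maxIndep hS hv⟩
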